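/- Restriction recursion for A: for m ≥ 2 and every λ, the restriction of A_λ^{(m)}(x | z^{(n)}|…|z^{(1)}) to the subvariety z_m^{(k)} = a τ^{2n−2k} (for all k = 1, …, n) equals (x − a τ^{n−1}) · Σ_{ρ=0}^{n−1} (−1)^ρ σ_ρ(aτ, aτ³, …, aτ^{2n−3}) A_{λ−ρ}^{(m−1)}(x | z'^{(n)}|…|z'^{(1)}), where z'^{(k)} = (z_1^{(k)},…,z_{m−1}^{(k)}). -/

import Mathlib

noncomputable section

/-- The `k`-th elementary symmetric function of the entries of a list. -/
def esymL {R : Type*} [CommRing R] (l : List R) (k : ℕ) : R :=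
  ((l.sublistsLen k).map List.prod).sum

/-- `f_λ^{(N)}(y | z₁,…,z_N)` where the variables are given as a list; the
deformation parameter `τ` and its inverse `τi` are passed separately so that
the definition makes sense over any commutative ring.  By the empty-sum
convention, `f_λ = 0` for `λ = 0`. -/
def fgenL {R : Type*} [CommRing R] (τ τi y : R) (lam : ℕ) (l : List R) : R :=
  ∑ κ ∈ Finset.range lam,
    (-1 : R) ^ κ * ((y * τ) ^ (lam - κ) - (y * τi) ^ (lam - κ)) * esymL l κ

/-- `τ ^ a` for an integer exponent `a`, negative powers being interpreted
via the inverse `τi` of `τ`. -/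
def mixpow {R : Type*} [CommRing R] (τ τi : R) (a : ℤ) : R :=
  if 0 ≤ a then τ ^ a.toNat else τi ^ (-a).toNat

/-- The argument list `z^{(n)}τ, …, z^{(k+1)}τ, z^{(k-1)}τ⁻¹, …, z^{(1)}τ⁻¹`
(the group `z^{(k)}` omitted); the group `z^{(k)}` is `Z (k-1)` (0-based). -/
def argList {R : Type*} [CommRing R] (n m : ℕ) (τ τi : R)
    (Z : Fin n → Fin m → R) (k : Fin n) : List R :=
  (((List.finRange n).reverse.filter (fun g => k < g)).map
      (fun g => (List.finRange m).map (fun j => Z g j * τ))).flatten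
  ++ (((List.finRange n).reverse.filter (fun g => g < k)).map
      (fun g => (List.finRange m).map (fun j => Z g j * τi))).flatten

/-- `x · A_λ^{(m)}(x | z^{(n)} | ⋯ | z^{(1)})`, i.e. the polynomial
`Σ_{k=1}^n Π_{j=1}^m (x - z_j^{(k)} τ^{2k-n-1}) ·
  f_λ^{((n-1)m)}(x τ^{n+1-2k} | z^{(n)}τ, …, z^{(k+1)}τ, z^{(k-1)}τ⁻¹, …, z^{(1)}τ⁻¹)`,
the group `z^{(k)}` being `Z (k-1)` (0-based). -/
def numerA {R : Type*} [CommRing R] (n m : ℕ) (τ τi : R) (lam : ℕ) (x : R)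
    (Z : Fin n → Fin m → R) : R :=
  ∑ k : Fin n,
    (∏ j : Fin m, (x - Z k j * mixpow τ τi (2 * ((k : ℕ) : ℤ) + 1 - (n : ℤ)))) *
      fgenL τ τi (x * mixpow τ τi ((n : ℤ) - (2 * ((k : ℕ) : ℤ) + 1))) lam
        (argList n m τ τi Z k)

/-- `A_λ^{(m)}(x | z^{(n)} | ⋯ | z^{(1)})` over `ℂ`, with `τ = q⁻¹`;
the group `z^{(k)}` is `Z (k-1)` (0-based). -/
def Afun (q : ℂ) (n m lam : ℕ) (x : ℂ) (Z : Fin n → Fin m → ℂ) : ℂ :=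
  numerA n m q⁻¹ q lam x Z / x

/-- The `k`-th elementary symmetric polynomial `σ_k(z₁,…,z_N)`. -/
def esymF {N : ℕ} (z : Fin N → ℂ) (k : ℕ) : ℂ :=
  ∑ s ∈ Finset.powersetCard k (Finset.univ : Finset (Fin N)), ∏ i ∈ s, z i

/-!
On the subvariety, the last column of `Z` contributes the factor `x - aτ^{n-1}` to the `k`-th
product, and the values `aτ, aτ³, …, aτ^{2n-3}` (in some order, but independently of `k`) to the
`k`-th argument list of `f`. Since `f_λ` only depends on the multiset of its arguments and
satisfies `f_λ(w, l) = f_λ(l) - w f_{λ-1}(l)`, splitting off a block `W` of arguments gives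
`f_λ(W, l) = Σ_ρ (-1)^ρ σ_ρ(W) f_{λ-ρ}(l)`; summing over `k` yields the recursion.
-/

open Finset

section CommRing

variable {R : Type*} [CommRing R]

lemma esymL_eq_esymm (l : List R) (k : ℕ) : esymL l k = Multiset.esymm (l : Multiset R) k := by
  simp [esymL, Multiset.esymm, Multiset.powersetCard_coe, Function.comp_def]

@[simp] lemma esymL_zero (l : List R) : esymL l 0 = 1 := by
  simp [esymL]

lemma esymL_cons_succ (w : R) (l : List R) (k : ℕ) :
    esymL (w :: l) (k + 1) = esymL l (k + 1) + w * esymL l k := by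
  simp [esymL, List.sublistsLen_succ_cons, Function.comp_def, List.sum_map_mul_left]

lemma fgenL_perm (τ τi y : R) (lam : ℕ) {l l' : List R} (h : l.Perm l') :
    fgenL τ τi y lam l = fgenL τ τi y lam l' := by
  simp only [fgenL, esymL_eq_esymm, Multiset.coe_eq_coe.mpr h]

lemma fgenL_succ (τ τi y : R) (lam : ℕ) (l : List R) :
    fgenL τ τi y (lam + 1) l = ((y * τ) ^ (lam + 1) - (y * τi) ^ (lam + 1)) +
      ∑ κ ∈ range lam, (-1) ^ (κ + 1) * ((y * τ) ^ (lam - κ) - (y * τi) ^ (lam - κ)) *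
        esymL l (κ + 1) := by
  rw [fgenL, sum_range_succ']
  simp [add_comm]

lemma fgenL_cons (τ τi y w : R) (lam : ℕ) (l : List R) :
    fgenL τ τi y lam (w :: l) = fgenL τ τi y lam l - w * fgenL τ τi y (lam - 1) l := by
  cases lam with
  | zero => simp [fgenL]
  | succ lam =>
    rw [fgenL_succ, fgenL_succ, add_tsub_cancel_right, fgenL, mul_sum, add_sub_assoc,
      ← sum_sub_distrib]
    congr 1
    refine sum_congr rfl fun κ _ => ?_
    rw [esymL_cons_succ]
    ring

lemma fgenL_append (τ τi y : R) (W L : List R) {N : ℕ} (hN : W.length < N) (lam : ℕ) :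
    fgenL τ τi y lam (W ++ L) =
      ∑ ρ ∈ range N, (-1) ^ ρ * esymL W ρ * fgenL τ τi y (lam - ρ) L := by
  obtain ⟨N, rfl⟩ : ∃ N', N = N' + 1 := ⟨N - 1, by omega⟩
  induction W generalizing N lam with
  | nil => simp [sum_range_succ', esymL]
  | cons w W ih =>
    obtain ⟨N, rfl⟩ : ∃ N', N = N' + 1 := ⟨N - 1, by rw [List.length_cons] at hN; omega⟩
    simp only [List.length_cons, add_lt_add_iff_right] at hN
    rw [List.cons_append, fgenL_cons, ih lam (N + 1) (by omega), ih (lam - 1) N hN,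
      sum_range_succ' _ (N + 1), sum_range_succ' _ (N + 1), mul_sum, add_sub_right_comm,
      ← sum_sub_distrib]
    simp only [esymL_zero]
    congr 1
    refine sum_congr rfl fun ρ _ => ?_
    rw [esymL_cons_succ, Nat.sub_sub, add_comm 1 ρ]
    ring

lemma coe_flatten_map_filter_finRange {β : Type*} {n : ℕ} (p : Fin n → Prop) [DecidablePred p]
    (f : Fin n → List β) :
    ((((List.finRange n).reverse.filter p).map f).flatten : Multiset β) =
      ∑ g ∈ univ.filter p, (f g : Multiset β) := by
  rw [← Multiset.coe_join, Multiset.join, ← Multiset.map_coe, ← Multiset.map_coe f,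
    Multiset.map_map, ← Multiset.filter_coe, Multiset.coe_reverse, sum_eq_multiset_sum]
  rfl

lemma coe_finRange_map {β : Type*} {m : ℕ} (f : Fin m → β) :
    ((List.finRange m).map f : Multiset β) = ∑ j, {f j} := by
  rw [← Multiset.sum_map_singleton (List.map f _ : Multiset β), ← Multiset.map_coe,
    Multiset.map_map]
  rfl

lemma coe_argList (n m : ℕ) (τ τi : R) (Z : Fin n → Fin m → R) (k : Fin n) :
    (argList n m τ τi Z k : Multiset R) =
      ∑ g ∈ univ.filter (k < ·), ∑ j, {Z g j * τ} +
        ∑ g ∈ univ.filter (· < k), ∑ j, {Z g j * τi} := by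
  rw [argList, ← Multiset.coe_add, coe_flatten_map_filter_finRange,
    coe_flatten_map_filter_finRange]
  simp only [coe_finRange_map]

lemma coe_argList_succ (n M : ℕ) (τ τi : R) (Z : Fin n → Fin (M + 1) → R) (k : Fin n) :
    (argList n (M + 1) τ τi Z k : Multiset R) =
      argList n M τ τi (fun g j => Z g j.castSucc) k +
        (∑ g ∈ univ.filter (k < ·), {Z g (Fin.last M) * τ} +
          ∑ g ∈ univ.filter (· < k), {Z g (Fin.last M) * τi}) := by
  simp only [coe_argList, Fin.sum_univ_castSucc, sum_add_distrib]
  abel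

end CommRing

section Reindex

variable {M : Type*} [AddCommMonoid M] {n : ℕ} (E : ℕ → M) (k : Fin n)

lemma sum_filter_gt_reflect :
    ∑ g ∈ univ.filter (k < ·), E (n - 1 - g) = ∑ i ∈ range (n - 1 - k), E i := by
  refine sum_nbij (fun g => n - 1 - g) (fun g hg => ?_) (fun g _ g' _ h => Fin.ext ?_)
    (fun i hi => ?_) (fun _ _ => rfl)
  · rw [mem_filter, Fin.lt_def] at hg
    rw [mem_range]
    omega
  · dsimp only at h
    omega
  · rw [mem_coe, mem_range] at hi
    refine ⟨⟨n - 1 - i, by omega⟩, ?_, by dsimp only; omega⟩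
    rw [mem_coe, mem_filter, Fin.lt_def]
    exact ⟨mem_univ _, by dsimp only; omega⟩

lemma sum_filter_lt_reflect :
    ∑ g ∈ univ.filter (· < k), E (n - 2 - g) = ∑ i ∈ Ico (n - 1 - k) (n - 1), E i := by
  refine sum_nbij (fun g => n - 2 - g) (fun g hg => ?_) (fun g hg g' hg' h => Fin.ext ?_)
    (fun i hi => ?_) (fun _ _ => rfl)
  · rw [mem_filter, Fin.lt_def] at hg
    rw [mem_Ico]
    omega
  · rw [mem_coe, mem_filter, Fin.lt_def] at hg hg'
    dsimp only at h
    omega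
  · rw [mem_coe, mem_Ico] at hi
    refine ⟨⟨n - 2 - i, by omega⟩, ?_, by dsimp only; omega⟩
    rw [mem_coe, mem_filter, Fin.lt_def]
    exact ⟨mem_univ _, by dsimp only; omega⟩

end Reindex

section Field

variable {K : Type*} [Field K] {τ : K}

lemma mixpow_inv (τ : K) (e : ℤ) : mixpow τ τ⁻¹ e = τ ^ e := by
  rw [mixpow]
  split_ifs with he
  · rw [← zpow_natCast, Int.toNat_of_nonneg he]
  · rw [← zpow_natCast, Int.toNat_of_nonneg (by omega), inv_zpow', neg_neg]

lemma pow_mul_zpow_eq_pow (hτ : τ ≠ 0) {a c : ℕ} {e : ℤ} (h : (a : ℤ) + e = c) :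
    τ ^ a * τ ^ e = τ ^ c := by
  rw [← zpow_natCast, ← zpow_add₀ hτ, h, zpow_natCast]

lemma coe_argList_of_last_column (hτ : τ ≠ 0) (n M : ℕ) (a : K) (Z : Fin n → Fin (M + 1) → K)
    (hZ : ∀ g, Z g (Fin.last M) = a * τ ^ (2 * n - 2 * ((g : ℕ) + 1))) (k : Fin n) :
    (argList n (M + 1) τ τ⁻¹ Z k : Multiset K) =
      ((List.finRange (n - 1)).map fun i : Fin (n - 1) => a * τ ^ (2 * (i : ℕ) + 1) :) +
        argList n M τ τ⁻¹ (fun g j => Z g j.castSucc) k := by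
  rw [coe_argList_succ, add_comm, coe_finRange_map,
    Fin.sum_univ_eq_sum_range (fun i => ({a * τ ^ (2 * i + 1)} : Multiset K)),
    ← sum_range_add_sum_Ico _ (show n - 1 - k ≤ n - 1 by omega), ← sum_filter_gt_reflect _ k,
    ← sum_filter_lt_reflect _ k]
  congr 2 <;> refine sum_congr rfl fun g hg => ?_ <;>
    simp only [mem_filter, mem_univ, true_and] at hg <;> rw [hZ]
  · rw [mul_assoc, ← pow_succ]
    congr 3
    omega
  · rw [show 2 * n - 2 * ((g : ℕ) + 1) = 2 * (n - 2 - g) + 1 + 1 by omega, pow_succ,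
      ← mul_assoc, mul_inv_cancel_right₀ hτ]

theorem numerA_succ_of_last_column (hτ : τ ≠ 0) (n M : ℕ) (a x : K)
    (Z : Fin n → Fin (M + 1) → K)
    (hZ : ∀ g, Z g (Fin.last M) = a * τ ^ (2 * n - 2 * ((g : ℕ) + 1))) (lam : ℕ) :
    numerA n (M + 1) τ τ⁻¹ lam x Z = (x - a * τ ^ (n - 1)) *
      ∑ ρ ∈ range n, (-1) ^ ρ *
        esymL ((List.finRange (n - 1)).map fun i : Fin (n - 1) => a * τ ^ (2 * (i : ℕ) + 1)) ρ *
        numerA n M τ τ⁻¹ (lam - ρ) x (fun g j => Z g j.castSucc) := by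
  set W := (List.finRange (n - 1)).map fun i : Fin (n - 1) => a * τ ^ (2 * (i : ℕ) + 1)
  have hprod (k : Fin n) : ∏ j : Fin (M + 1), (x - Z k j * mixpow τ τ⁻¹ (2 * (k : ℕ) + 1 - n)) =
      (∏ j : Fin M, (x - Z k j.castSucc * mixpow τ τ⁻¹ (2 * (k : ℕ) + 1 - n))) *
        (x - a * τ ^ (n - 1)) := by
    rw [Fin.prod_univ_castSucc, hZ, mixpow_inv, mul_assoc,
      pow_mul_zpow_eq_pow hτ (c := n - 1) (by omega)]
  have hfgen (y : K) (k : Fin n) : fgenL τ τ⁻¹ y lam (argList n (M + 1) τ τ⁻¹ Z k) =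
      ∑ ρ ∈ range n, (-1) ^ ρ * esymL W ρ *
        fgenL τ τ⁻¹ y (lam - ρ) (argList n M τ τ⁻¹ (fun g j => Z g j.castSucc) k) := by
    have hW : W.length < n := by simpa [W] using k.pos
    rw [fgenL_perm _ _ _ _ (Multiset.coe_eq_coe.mp (coe_argList_of_last_column hτ n M a Z hZ k)),
      fgenL_append _ _ _ _ _ hW]
  simp only [numerA, hprod, hfgen, mul_sum]
  rw [sum_comm]
  refine sum_congr rfl fun ρ _ => sum_congr rfl fun k _ => ?_
  ring

end Field

lemma esymL_map_finRange {N : ℕ} (z : Fin N → ℂ) (ρ : ℕ) :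
    esymL ((List.finRange N).map z) ρ = esymF z ρ := by
  rw [esymL_eq_esymm, esymF, ← Finset.esymm_map_val]
  rfl

/-- restriction recursion for `A`: for `m ≥ 2` and every `λ`,
restricting to `z_m^{(k)} = a τ^{2n-2k}` (for all `k = 1, …, n`) gives
`A_λ^{(m)}(x|z) = (x - aτ^{n-1}) Σ_{ρ=0}^{n-1} (-1)^ρ σ_ρ(aτ, aτ³, …, aτ^{2n-3})
  A_{λ-ρ}^{(m-1)}(x | z'^{(n)} | ⋯ | z'^{(1)})`, with `τ = q⁻¹` and
`A_μ = 0` for `μ ≤ 0`. -/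
theorem A_restriction_recursion (n m : ℕ) (hm : 2 ≤ m)
    (q : ℂ) (hq : q ≠ 0) (a : ℂ) (x : ℂ)
    (Z : Fin n → Fin m → ℂ)
    (hZ : ∀ k : Fin n, Z k ⟨m - 1, by omega⟩ = a * (q⁻¹) ^ (2 * n - 2 * ((k : ℕ) + 1)))
    (lam : ℕ) :
    Afun q n m lam x Z
      = (x - a * (q⁻¹) ^ (n - 1)) *
        ∑ ρ ∈ Finset.range n, (-1 : ℂ) ^ ρ *
          esymF (fun i : Fin (n - 1) => a * (q⁻¹) ^ (2 * (i : ℕ) + 1)) ρ *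
          Afun q n (m - 1) (lam - ρ) x (fun k j => Z k ⟨(j : ℕ), by omega⟩) := by
  obtain ⟨M, rfl⟩ : ∃ M, m = M + 1 := ⟨m - 1, by omega⟩
  have key := numerA_succ_of_last_column (inv_ne_zero hq) n M a x Z hZ lam
  simp only [inv_inv, esymL_map_finRange] at key
  simp only [Afun, key, Finset.sum_div, mul_div_assoc]
  -- the columns `Fin (M + 1 - 1)` and `Fin M` of the restricted `Z` agree definitionally
  rfl
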